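/- arXiv:1007.3653 — 6 statements merged into one kernel-verified Lean document; each statement's English description precedes it below -/
import Mathlib

section
/- Let f, g be real analytic near 0 with g(0) = 0, g'(0) = 1, and x·g(x) > 0 for x ≠ 0 in a punctured neighborhood of 0. Define F(x) = ∫₀ˣ f(s) ds. Then the function x ↦ 2∫₀ˣ g(s) e^{2F(s)} ds is nonnegative near 0, vanishes only at 0, and its square root ξ(x), chosen with x·ξ(x) > 0 for x ≠ 0, satisfies ξ(0)=0 and ξ'(0) = 1. -/
/-!
The integrand `h = g · exp (2F)` is continuous near `0`, vanishes there and has `h'(0) = 1`, so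
L'Hôpital's rule gives `G x / x² → 1`. Hence `G > 0` on a punctured neighbourhood of `0`, and
`ξ = sign · √G` has difference quotient `ξ x / x = √(G x / x²) → 1`.
-/

open Filter Set Topology

theorem eventually_hasDerivAt_integral_of_continuousAt {f : ℝ → ℝ} {a : ℝ}
    (hf : ∀ᶠ x in 𝓝 a, ContinuousAt f x) :
    ∀ᶠ x in 𝓝 a, HasDerivAt (fun u => ∫ s in a..u, f s) (f x) x := by
  obtain ⟨l, u, ha, hsub⟩ := mem_nhds_iff_exists_Ioo_subset.mp hf
  have hcont : ContinuousOn f (Ioo l u) := fun x hx => (hsub hx).continuousWithinAt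
  filter_upwards [Ioo_mem_nhds ha.1 ha.2] with x hx
  exact intervalIntegral.integral_hasDerivAt_right
    (hcont.mono (ordConnected_Ioo.uIcc_subset ha hx)).intervalIntegrable
    (hcont.stronglyMeasurableAtFilter isOpen_Ioo x hx) (hsub hx)

theorem tendsto_integral_div_sq_of_hasDerivAt {f : ℝ → ℝ} {a c : ℝ}
    (hf : ∀ᶠ x in 𝓝 a, ContinuousAt f x) (hfa : f a = 0) (hd : HasDerivAt f c a) :
    Tendsto (fun x => (∫ s in a..x, f s) / (x - a) ^ 2) (𝓝[≠] a) (𝓝 (c / 2)) := by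
  refine HasDerivAt.lhopital_zero_nhdsNE (f' := f) (g' := fun x => 2 * (x - a))
    (eventually_nhdsWithin_of_eventually_nhds (eventually_hasDerivAt_integral_of_continuousAt hf))
    (Eventually.of_forall fun x => by simpa using ((hasDerivAt_id x).sub_const a).fun_pow 2)
    (eventually_nhdsWithin_of_forall fun x hx => by simpa [sub_eq_zero] using hx)
    ?_ ?_ ?_
  · have := (eventually_hasDerivAt_integral_of_continuousAt hf).self_of_nhds.continuousAt
    simpa using this.tendsto.mono_left nhdsWithin_le_nhds
  · exact tendsto_nhdsWithin_of_tendsto_nhds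
      (((continuous_sub_right a).pow 2).tendsto' a 0 (by simp))
  · have hslope := (hasDerivAt_iff_tendsto_slope.mp hd).div_const 2
    refine hslope.congr' (eventually_nhdsWithin_of_forall fun x hx => ?_)
    have : x - a ≠ 0 := sub_ne_zero.mpr hx
    rw [slope_def_field, hfa, sub_zero]
    field_simp

noncomputable def signedSqrt (G : ℝ → ℝ) (x : ℝ) : ℝ := Real.sign x * √(G x)

@[simp]
theorem signedSqrt_zero (G : ℝ → ℝ) : signedSqrt G 0 = 0 := by
  simp [signedSqrt]

theorem sq_signedSqrt {G : ℝ → ℝ} {x : ℝ} (hx : x ≠ 0) (hG : 0 ≤ G x) :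
    signedSqrt G x ^ 2 = G x := by
  rcases Real.sign_apply_eq_of_ne_zero x hx with h | h <;>
    simp [signedSqrt, h, Real.sq_sqrt hG]

theorem mul_signedSqrt_pos {G : ℝ → ℝ} {x : ℝ} (hx : x ≠ 0) (hG : 0 < G x) :
    0 < x * signedSqrt G x := by
  have := Real.sign_mul_pos_of_ne_zero x hx
  calc 0 < Real.sign x * x * √(G x) := mul_pos this (Real.sqrt_pos.mpr hG)
    _ = x * signedSqrt G x := by rw [signedSqrt]; ring

theorem hasDerivAt_signedSqrt {G : ℝ → ℝ} {c : ℝ}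
    (hG : Tendsto (fun x => G x / x ^ 2) (𝓝[≠] 0) (𝓝 c)) :
    HasDerivAt (signedSqrt G) (√c) 0 := by
  rw [hasDerivAt_iff_tendsto_slope]
  refine ((Real.continuous_sqrt.tendsto c).comp hG).congr'
    (eventually_nhdsWithin_of_forall fun x hx => ?_)
  have hx : x ≠ 0 := hx
  rw [Function.comp_apply, Real.sqrt_div' _ (sq_nonneg x), Real.sqrt_sq_eq_abs, slope_def_field,
    signedSqrt_zero, sub_zero, sub_zero, signedSqrt]
  rcases hx.lt_or_gt with h | h
  · rw [Real.sign_of_neg h, abs_of_neg h]; ring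
  · rw [Real.sign_of_pos h, abs_of_pos h]; ring

theorem eventually_pos_of_tendsto_div_sq {G : ℝ → ℝ} {c : ℝ}
    (hG : Tendsto (fun x => G x / x ^ 2) (𝓝[≠] 0) (𝓝 c)) (hc : 0 < c) :
    ∀ᶠ x in 𝓝 0, x ≠ 0 → 0 < G x := by
  refine eventually_nhdsWithin_iff.mp ?_
  filter_upwards [hG.eventually_const_lt hc, self_mem_nhdsWithin] with x hx hx0
  have : x ≠ 0 := hx0
  exact (div_pos_iff_of_pos_right (by positivity)).mp hx

theorem tendsto_integral_mul_exp_integral_div_sq {f g : ℝ → ℝ} {c : ℝ}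
    (hf : ∀ᶠ x in 𝓝 0, ContinuousAt f x) (hg : ∀ᶠ x in 𝓝 0, ContinuousAt g x)
    (hg0 : g 0 = 0) (hgd : HasDerivAt g c 0) :
    Tendsto (fun x => (2 * ∫ s in (0:ℝ)..x, g s * Real.exp (2 * ∫ t in (0:ℝ)..s, f t)) / x ^ 2)
      (𝓝[≠] 0) (𝓝 c) := by
  set h : ℝ → ℝ := fun s => g s * Real.exp (2 * ∫ t in (0:ℝ)..s, f t)
  have hFd := eventually_hasDerivAt_integral_of_continuousAt hf
  have hh_cont : ∀ᶠ x in 𝓝 0, ContinuousAt h x := by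
    filter_upwards [hg, hFd] with x hgx hFx
    exact hgx.mul (hFx.continuousAt.const_mul 2).rexp
  have hh_deriv : HasDerivAt h c 0 := by
    simpa [h, hg0] using hgd.fun_mul (hFd.self_of_nhds.const_mul 2).exp
  have := (tendsto_integral_div_sq_of_hasDerivAt hh_cont (by simp [h, hg0]) hh_deriv).const_mul 2
  simpa [mul_div_assoc, mul_div_cancel₀] using this

theorem stmt1_general (f g F G : ℝ → ℝ) (hf : AnalyticAt ℝ f 0) (hg : AnalyticAt ℝ g 0)
    (hg0 : g 0 = 0) (hg1 : deriv g 0 = 1)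
    (hF : ∀ x, F x = ∫ s in (0:ℝ)..x, f s)
    (hG : ∀ x, G x = 2 * ∫ s in (0:ℝ)..x, g s * Real.exp (2 * F s)) :
    (∀ᶠ x in nhds 0, 0 ≤ G x) ∧
    (∀ᶠ x in nhds 0, G x = 0 → x = 0) ∧
    ∃ ξ : ℝ → ℝ, (∀ᶠ x in nhds 0, ξ x ^ 2 = G x) ∧
      (∀ᶠ x in nhdsWithin 0 {(0:ℝ)}ᶜ, x * ξ x > 0) ∧
      ξ 0 = 0 ∧ deriv ξ 0 = 1 := by
  obtain rfl : F = fun u => ∫ s in (0:ℝ)..u, f s := funext hF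
  have hlim : Tendsto (fun x => G x / x ^ 2) (𝓝[≠] 0) (𝓝 1) := by
    simpa only [hG] using tendsto_integral_mul_exp_integral_div_sq
      (hf.eventually_analyticAt.mono fun _ hx => hx.continuousAt)
      (hg.eventually_analyticAt.mono fun _ hx => hx.continuousAt)
      hg0 (hg1 ▸ hg.differentiableAt.hasDerivAt)
  have hpos := eventually_pos_of_tendsto_div_sq hlim one_pos
  have hnonneg : ∀ᶠ x in 𝓝 0, 0 ≤ G x := by
    filter_upwards [hpos] with x hx
    rcases eq_or_ne x 0 with rfl | hx0
    exacts [by simp [hG], (hx hx0).le]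
  refine ⟨hnonneg, ?_, signedSqrt G, ?_, ?_, signedSqrt_zero G, ?_⟩
  · filter_upwards [hpos] with x hx hGx
    by_contra hx0
    exact (hx hx0).ne' hGx
  · filter_upwards [hnonneg] with x hx
    rcases eq_or_ne x 0 with rfl | hx0
    · simp [hG]
    · exact sq_signedSqrt hx0 hx
  · rw [eventually_nhdsWithin_iff]
    filter_upwards [hpos] with x hx hx0
    exact mul_signedSqrt_pos hx0 (hx hx0)
  · simpa using (hasDerivAt_signedSqrt hlim).deriv

/-- with `g 0 = 0`, `g' 0 = 1`, `x * g x > 0` on a punctured neighborhood of `0`,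
the function `G x = 2 ∫₀ˣ g s * exp (2 F s) ds` is nonnegative near `0`, vanishes only at `0`,
and its square root `ξ` chosen with `x * ξ x > 0` for `x ≠ 0` satisfies `ξ 0 = 0`, `ξ' 0 = 1`. -/
theorem stmt1 (f g F G : ℝ → ℝ) (hf : AnalyticAt ℝ f 0) (hg : AnalyticAt ℝ g 0)
    (hg0 : g 0 = 0) (hg1 : deriv g 0 = 1)
    (hsign : ∀ᶠ x in nhdsWithin 0 {(0:ℝ)}ᶜ, x * g x > 0)
    (hF : ∀ x, F x = ∫ s in (0:ℝ)..x, f s)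
    (hG : ∀ x, G x = 2 * ∫ s in (0:ℝ)..x, g s * Real.exp (2 * F s)) :
    (∀ᶠ x in nhds 0, 0 ≤ G x) ∧
    (∀ᶠ x in nhds 0, G x = 0 → x = 0) ∧
    ∃ ξ : ℝ → ℝ, (∀ᶠ x in nhds 0, ξ x ^ 2 = G x) ∧
      (∀ᶠ x in nhdsWithin 0 {(0:ℝ)}ᶜ, x * ξ x > 0) ∧
      ξ 0 = 0 ∧ deriv ξ 0 = 1 :=
  stmt1_general f g F G hf hg hg0 hg1 hF hG
end

section
/- With F, φ, ξ as above (g(0)=0, g'(0)=1, xg(x)>0 for x≠0) and h an odd real analytic function near 0 with 1 + h(ξ(x)) ≠ 0 near 0, the condition ξ(x)/(1 + h(ξ(x))) = g(x)e^{F(x)} for all x near 0 holds if and only if φ(x) = ξ(x) + ∫₀^{ξ(x)} h(t) dt for all x near 0. -/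
/-!
Put `Φ = ξ + H ∘ ξ` with `H u = ∫₀ᵘ h`. Differentiating `ξ² = 2 ∫₀ˣ g e^{2F}` gives
`ξ' = g e^{2F} / ξ` off `0`, so `Φ' = (1 + h ∘ ξ) g e^{2F} / ξ`, while `φ' = e^F`. Hence the first
condition says exactly that `φ' = Φ'` on a punctured neighbourhood of `0`; as `φ(0) = Φ(0) = 0`
and both are continuous at `0`, the mean value theorem turns this into `φ = Φ` near `0`.
-/

open Filter Topology Set Metric intervalIntegral

lemma eventually_hasDerivAt_integral {a A : ℝ → ℝ} {c : ℝ} (hA : ∀ x, A x = ∫ t in c..x, a t)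
    (ha : ∀ᶠ y in 𝓝 c, ContinuousAt a y) : ∀ᶠ x in 𝓝 c, HasDerivAt A (a x) x := by
  obtain ⟨ε, hε, hball⟩ := eventually_nhds_iff_ball.mp ha
  have hcont : ContinuousOn a (ball c ε) := fun y hy => (hball y hy).continuousWithinAt
  filter_upwards [ball_mem_nhds c hε] with x hx
  have hsub : uIcc c x ⊆ ball c ε :=
    (convex_ball c ε).ordConnected.uIcc_subset (mem_ball_self hε) hx
  rw [show A = fun x => ∫ t in c..x, a t from funext hA]
  exact integral_hasDerivAt_right (hcont.mono hsub).intervalIntegrable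
    (hcont.stronglyMeasurableAtFilter isOpen_ball x hx) (hball x hx)

lemma eventually_eq_self_of_hasDerivAt_zero {ψ : ℝ → ℝ} {a : ℝ} (hc : ContinuousAt ψ a)
    (hd : ∀ᶠ x in 𝓝[≠] a, HasDerivAt ψ 0 x) : ∀ᶠ x in 𝓝 a, ψ x = ψ a := by
  obtain ⟨ε, hε, hball⟩ := eventually_nhds_iff_ball.mp (eventually_nhdsWithin_iff.mp hd)
  have hcont : ContinuousOn ψ (ball a ε) := by
    intro z hz
    rcases eq_or_ne z a with rfl | hza
    · exact hc.continuousWithinAt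
    · exact (hball z hz hza).continuousAt.continuousWithinAt
  have hconst : ∀ u ∈ ball a ε, ∀ v ∈ ball a ε, u < v → a ∉ Ioo u v → ψ u = ψ v := by
    intro u hu v hv huv ha
    have hsub : Icc u v ⊆ ball a ε := (convex_ball a ε).ordConnected.out hu hv
    obtain ⟨_, -, hslope⟩ := exists_hasDerivAt_eq_slope ψ (fun _ => 0) huv (hcont.mono hsub)
      fun z hz => hball z (hsub (Ioo_subset_Icc_self hz)) fun hza => ha (hza ▸ hz)
    rw [eq_comm, div_eq_zero_iff, sub_eq_zero] at hslope
    exact (hslope.resolve_right (sub_ne_zero.mpr huv.ne')).symm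
  filter_upwards [ball_mem_nhds a hε] with x hx
  rcases lt_trichotomy x a with hxa | rfl | hax
  · exact hconst x hx a (mem_ball_self hε) hxa fun h => lt_irrefl a h.2
  · rfl
  · exact (hconst a (mem_ball_self hε) x hx hax fun h => lt_irrefl a h.1).symm

lemma eventuallyEq_nhds_iff_of_hasDerivAt_nhdsNE {u v u' v' : ℝ → ℝ} {a : ℝ}
    (hu : ContinuousAt u a) (hv : ContinuousAt v a) (ha : u a = v a)
    (hu' : ∀ᶠ x in 𝓝[≠] a, HasDerivAt u (u' x) x) (hv' : ∀ᶠ x in 𝓝[≠] a, HasDerivAt v (v' x) x) :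
    u =ᶠ[𝓝 a] v ↔ ∀ᶠ x in 𝓝[≠] a, u' x = v' x := by
  constructor
  · intro huv
    filter_upwards [eventually_nhdsWithin_of_eventually_nhds huv.eventuallyEq_nhds, hu', hv']
      with x hx hux hvx
    exact (hux.congr_of_eventuallyEq hx.symm).unique hvx
  · intro hder
    have hd : ∀ᶠ x in 𝓝[≠] a, HasDerivAt (u - v) 0 x := by
      filter_upwards [hu', hv', hder] with x hux hvx hx
      simpa [hx] using hux.sub hvx
    filter_upwards [eventually_eq_self_of_hasDerivAt_zero (hu.sub hv) hd] with x hx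
    simpa [ha, sub_eq_zero] using hx

lemma eventually_nhds_iff_eventually_nhdsNE {α : Type*} [TopologicalSpace α] {p : α → Prop} {a : α}
    (ha : p a) :
    (∀ᶠ x in 𝓝 a, p x) ↔ ∀ᶠ x in 𝓝[≠] a, p x := by
  rw [← nhdsNE_sup_pure, eventually_sup, eventually_pure]
  exact and_iff_left ha

lemma hasDerivAt_of_sq_eq_of_pos {ξ q : ℝ → ℝ} {q' x : ℝ} (hsq : ∀ y, ξ y ^ 2 = q y)
    (hq : HasDerivAt q q' x) (hpos : ∀ᶠ y in 𝓝 x, 0 < ξ y) : HasDerivAt ξ (q' / (2 * ξ x)) x := by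
  have hξ : ξ =ᶠ[𝓝 x] fun y => √(q y) :=
    hpos.mono fun y hy => by simp only [← hsq, Real.sqrt_sq hy.le]
  have hqx : q x ≠ 0 := by rw [← hsq]; exact pow_ne_zero 2 hpos.self_of_nhds.ne'
  have := (hq.sqrt hqx).congr_of_eventuallyEq hξ
  rwa [← hξ.eq_of_nhds] at this

lemma hasDerivAt_of_sq_eq {ξ q : ℝ → ℝ} {q' x : ℝ} (hsq : ∀ y, ξ y ^ 2 = q y)
    (hq : HasDerivAt q q' x) (hsign : ∀ᶠ y in 𝓝 x, 0 < ξ x * ξ y) :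
    HasDerivAt ξ (q' / (2 * ξ x)) x := by
  have hx : ξ x ≠ 0 := fun h => by simpa [h] using hsign.self_of_nhds
  rcases hx.lt_or_gt with hneg | hpos
  · have := hasDerivAt_of_sq_eq_of_pos (ξ := -ξ) (fun y => by simp [hsq]) hq
      (hsign.mono fun y hy => neg_pos.mpr (neg_of_mul_pos_right hy hneg.le))
    simpa [div_neg] using this.neg
  · exact hasDerivAt_of_sq_eq_of_pos hsq hq (hsign.mono fun y hy => pos_of_mul_pos_right hy hpos.le)

lemma continuousAt_of_sq_eq_of_eq_zero {ξ q : ℝ → ℝ} {a : ℝ} (hsq : ∀ y, ξ y ^ 2 = q y)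
    (hq : ContinuousAt q a) (ha : q a = 0) : ContinuousAt ξ a := by
  have hξa : ξ a = 0 := pow_eq_zero_iff two_ne_zero |>.mp (by rw [hsq, ha])
  have hsqrt : Tendsto (fun y => √(q y)) (𝓝 a) (𝓝 0) := by
    simpa [ha] using hq.sqrt.tendsto
  rw [ContinuousAt, hξa, tendsto_zero_iff_abs_tendsto_zero]
  refine hsqrt.congr fun y => ?_
  rw [← hsq, Real.sqrt_sq_eq_abs]
  rfl

lemma eventually_nhdsNE_eventually_mul_pos {ξ : ℝ → ℝ} (h : ∀ᶠ x in 𝓝[≠] 0, 0 < x * ξ x) :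
    ∀ᶠ x in 𝓝[≠] 0, ∀ᶠ y in 𝓝 x, 0 < ξ x * ξ y := by
  rw [← eventually_eventually_nhdsWithin] at h
  filter_upwards [h, self_mem_nhdsWithin] with x hx hx0
  rw [isOpen_compl_singleton.nhdsWithin_eq hx0] at hx
  have hxy : ∀ᶠ y in 𝓝 x, 0 < x * y :=
    (continuousAt_const.mul continuousAt_id).tendsto.eventually
      (lt_mem_nhds (mul_self_pos.mpr hx0))
  filter_upwards [hx, hxy] with y hy hxy
  refine pos_of_mul_pos_right (a := x * y) ?_ hxy.le
  convert mul_pos hx.self_of_nhds hy using 1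
  ring

lemma continuousAt_zero_of_sq_eq_two_mul_integral {ξ G : ℝ → ℝ}
    (hsq : ∀ x, ξ x ^ 2 = 2 * ∫ s in (0:ℝ)..x, G s) (hG : ∀ᶠ y in 𝓝 0, ContinuousAt G y) :
    ContinuousAt ξ 0 :=
  continuousAt_of_sq_eq_of_eq_zero hsq
    ((eventually_hasDerivAt_integral (fun _ => rfl) hG).self_of_nhds.continuousAt.const_mul 2)
    (by simp)

lemma eventually_hasDerivAt_of_sq_eq_two_mul_integral {ξ G : ℝ → ℝ}
    (hsq : ∀ x, ξ x ^ 2 = 2 * ∫ s in (0:ℝ)..x, G s) (hG : ∀ᶠ y in 𝓝 0, ContinuousAt G y)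
    (hsign : ∀ᶠ x in 𝓝[≠] 0, 0 < x * ξ x) : ∀ᶠ x in 𝓝[≠] 0, HasDerivAt ξ (G x / ξ x) x := by
  filter_upwards [eventually_nhdsNE_eventually_mul_pos hsign,
    eventually_nhdsWithin_of_eventually_nhds (eventually_hasDerivAt_integral (fun _ => rfl) hG)]
    with x hsignx hGx
  simpa only [mul_div_mul_left _ _ (two_ne_zero' ℝ)] using
    hasDerivAt_of_sq_eq hsq (hGx.const_mul 2) hsignx

lemma div_eq_mul_exp_iff_exp_eq_mul_div {a b c u : ℝ} (ha : a ≠ 0) (hb : b ≠ 0) :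
    a / b = c * Real.exp u ↔ Real.exp u = b * (c * Real.exp (2 * u) / a) := by
  rw [two_mul, Real.exp_add]
  constructor <;> intro h <;> field_simp at h ⊢ <;> linear_combination h

theorem stmt2_general (f g F φ ξ h : ℝ → ℝ)
    (hf : AnalyticAt ℝ f 0) (hg : AnalyticAt ℝ g 0)
    (hg0 : g 0 = 0)
    (hF : ∀ x, F x = ∫ s in (0:ℝ)..x, f s)
    (hφ : ∀ x, φ x = ∫ s in (0:ℝ)..x, Real.exp (F s))
    (hξsq : ∀ x, ξ x ^ 2 = 2 * ∫ s in (0:ℝ)..x, g s * Real.exp (2 * F s))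
    (hξsign : ∀ᶠ x in nhdsWithin 0 {(0:ℝ)}ᶜ, x * ξ x > 0)
    (hh : AnalyticAt ℝ h 0)
    (hne : ∀ᶠ x in nhds 0, 1 + h (ξ x) ≠ 0) :
    (∀ᶠ x in nhds 0, ξ x / (1 + h (ξ x)) = g x * Real.exp (F x)) ↔
    (∀ᶠ x in nhds 0, φ x = ξ x + ∫ t in (0:ℝ)..(ξ x), h t) := by
  set H : ℝ → ℝ := fun u => ∫ t in (0:ℝ)..u, h t
  set ξ' : ℝ → ℝ := fun x => g x * Real.exp (2 * F x) / ξ x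
  have hFc : ∀ᶠ x in 𝓝 0, ContinuousAt F x :=
    (eventually_hasDerivAt_integral hF
      (hf.eventually_analyticAt.mono fun _ hx => hx.continuousAt)).mono fun _ hx => hx.continuousAt
  have hφd : ∀ᶠ x in 𝓝 0, HasDerivAt φ (Real.exp (F x)) x :=
    eventually_hasDerivAt_integral hφ (hFc.mono fun _ hx => hx.rexp)
  have hGc : ∀ᶠ x in 𝓝 0, ContinuousAt (fun s => g s * Real.exp (2 * F s)) x :=
    (hg.eventually_analyticAt.and hFc).mono fun _ hx =>
      hx.1.continuousAt.mul (continuousAt_const.mul hx.2).rexp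
  have hξ0 : ξ 0 = 0 := by simpa using hξsq 0
  have hξc : ContinuousAt ξ 0 := continuousAt_zero_of_sq_eq_two_mul_integral hξsq hGc
  have hHd : ∀ᶠ t in 𝓝 0, HasDerivAt H (h t) t := eventually_hasDerivAt_integral (fun _ => rfl)
    (hh.eventually_analyticAt.mono fun _ ht => ht.continuousAt)
  have hΦd : ∀ᶠ x in 𝓝[≠] 0,
      HasDerivAt (fun y => ξ y + H (ξ y)) ((1 + h (ξ x)) * ξ' x) x := by
    filter_upwards [eventually_hasDerivAt_of_sq_eq_two_mul_integral hξsq hGc hξsign,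
      eventually_nhdsWithin_of_eventually_nhds ((hξ0 ▸ hξc.tendsto).eventually hHd)] with x hξx hHx
    exact (hξx.add (hHx.comp x hξx)).congr_deriv (by ring)
  have hΦc : ContinuousAt (fun y => ξ y + H (ξ y)) 0 :=
    hξc.add (hHd.self_of_nhds.continuousAt.comp_of_eq hξc hξ0)
  calc (∀ᶠ x in 𝓝 0, ξ x / (1 + h (ξ x)) = g x * Real.exp (F x))
      ↔ ∀ᶠ x in 𝓝[≠] 0, Real.exp (F x) = (1 + h (ξ x)) * ξ' x := by
        rw [eventually_nhds_iff_eventually_nhdsNE (by simp [hξ0, hg0])]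
        refine eventually_congr ?_
        filter_upwards [eventually_nhdsWithin_of_eventually_nhds hne, hξsign] with x hnex hsignx
        exact div_eq_mul_exp_iff_exp_eq_mul_div (right_ne_zero_of_mul hsignx.ne') hnex
    _ ↔ φ =ᶠ[𝓝 0] fun y => ξ y + H (ξ y) :=
        (eventuallyEq_nhds_iff_of_hasDerivAt_nhdsNE hφd.self_of_nhds.continuousAt hΦc
          (by simp [hφ, hξ0, H]) (eventually_nhdsWithin_of_eventually_nhds hφd) hΦd).symm

/-- equivalence of the two isochronicity conditions (1.5) and (1.6):
`ξ x / (1 + h (ξ x)) = g x * exp (F x)` near `0` iff `φ x = ξ x + ∫₀^{ξ x} h` near `0`. -/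
theorem stmt2 (f g F φ ξ h : ℝ → ℝ)
    (hf : AnalyticAt ℝ f 0) (hg : AnalyticAt ℝ g 0)
    (hg0 : g 0 = 0) (hg1 : deriv g 0 = 1)
    (hsign : ∀ᶠ x in nhdsWithin 0 {(0:ℝ)}ᶜ, x * g x > 0)
    (hF : ∀ x, F x = ∫ s in (0:ℝ)..x, f s)
    (hφ : ∀ x, φ x = ∫ s in (0:ℝ)..x, Real.exp (F s))
    (hξsq : ∀ x, ξ x ^ 2 = 2 * ∫ s in (0:ℝ)..x, g s * Real.exp (2 * F s))
    (hξsign : ∀ᶠ x in nhdsWithin 0 {(0:ℝ)}ᶜ, x * ξ x > 0)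
    (hh : AnalyticAt ℝ h 0) (hodd : ∀ t, h (-t) = - h t)
    (hne : ∀ᶠ x in nhds 0, 1 + h (ξ x) ≠ 0) :
    (∀ᶠ x in nhds 0, ξ x / (1 + h (ξ x)) = g x * Real.exp (F x)) ↔
    (∀ᶠ x in nhds 0, φ x = ξ x + ∫ t in (0:ℝ)..(ξ x), h t) :=
  stmt2_general f g F φ ξ h hf hg hg0 hF hφ hξsq hξsign hh hne
end

section
/- Let f = N_f/D_f and g = N_g/D_g be rational functions with D_f(0)=D_g(0)=1, and define Q₀(x) = N_g(x) and Qₖ(x) = Qₖ₋₁·D_g·((1−k)D_f' + (2−k)N_f) − k·Qₖ₋₁·D_g'·D_f + Qₖ₋₁'·D_g·D_f. Then each Qₖ is a polynomial, and Q̂ₖ(x) := Qₖ(x)/(D_f(x)^k D_g(x)^{k+1}) satisfies the recursion Q̂ₖ = Q̂ₖ₋₁' − (k−2)(N_f/D_f)·Q̂ₖ₋₁ with Q̂₀ = N_g/D_g. -/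
/-! The recursion for `Qₖ` is the numerator produced by the quotient rule: the derivative of
`P / (A ^ m * B ^ n)` is `(P' A B - m P A' B - n P A B') / (A ^ (m + 1) * B ^ (n + 1))`, and
subtracting `(k - 1) (N_f / D_f) Q̂ₖ` from that of `Q̂ₖ` leaves `Qₖ₊₁` over
`D_f ^ (k + 1) D_g ^ (k + 2)`. -/

open Polynomial

lemma natCast_mul_pow_sub_one_mul {R : Type*} [CommSemiring R] (m : ℕ) (a : R) :
    (m : R) * a ^ (m - 1) * a = m * a ^ m := by
  cases m with
  | zero => simp
  | succ m => rw [Nat.add_sub_cancel, mul_assoc, ← pow_succ]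

theorem Polynomial.hasDerivAt_eval_div_pow_mul_pow (P A B : ℝ[X]) (m n : ℕ) {x : ℝ}
    (hA : A.eval x ≠ 0) (hB : B.eval x ≠ 0) :
    HasDerivAt (fun y => P.eval y / (A.eval y ^ m * B.eval y ^ n))
      ((P.derivative.eval x * A.eval x * B.eval x
          - m * P.eval x * A.derivative.eval x * B.eval x
          - n * P.eval x * A.eval x * B.derivative.eval x)
        / (A.eval x ^ (m + 1) * B.eval x ^ (n + 1))) x := by
  have hden : A.eval x ^ m * B.eval x ^ n ≠ 0 := by positivity
  refine ((P.hasDerivAt x).div (((A.hasDerivAt x).pow m).mul ((B.hasDerivAt x).pow n))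
    hden).congr_deriv ?_
  rw [div_eq_div_iff (by positivity) (by positivity)]
  simp only [Pi.mul_apply, Pi.pow_apply]
  linear_combination
    (-P.eval x * A.derivative.eval x * B.eval x ^ (2 * n + 1) * A.eval x ^ m)
        * natCast_mul_pow_sub_one_mul m (A.eval x)
      + (-P.eval x * B.derivative.eval x * A.eval x ^ (2 * m + 1) * B.eval x ^ n)
        * natCast_mul_pow_sub_one_mul n (B.eval x)

theorem stmt10_general (Nf Df Ng Dg : Polynomial ℝ)
    (Q : ℕ → Polynomial ℝ) (hQ0 : Q 0 = Ng)
    (hQk : ∀ k : ℕ, Q (k+1) =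
      Q k * Dg * (Polynomial.C (1 - ((k:ℝ)+1)) * Df.derivative
                    + Polynomial.C (2 - ((k:ℝ)+1)) * Nf)
      - Polynomial.C ((k:ℝ)+1) * Q k * Dg.derivative * Df
      + (Q k).derivative * Dg * Df)
    (Qhat : ℕ → ℝ → ℝ)
    (hQhat : ∀ (k : ℕ) (x : ℝ),
      Qhat k x = (Q k).eval x / ((Df.eval x) ^ k * (Dg.eval x) ^ (k+1))) :
    (∀ x, Qhat 0 x = Ng.eval x / Dg.eval x) ∧
    (∀ (k : ℕ) (x : ℝ), Df.eval x ≠ 0 → Dg.eval x ≠ 0 →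
      Qhat (k+1) x = deriv (Qhat k) x
        - (((k:ℝ)+1) - 2) * (Nf.eval x / Df.eval x) * Qhat k x) := by
  refine ⟨fun x => by simp [hQhat, hQ0], fun k x hDf hDg => ?_⟩
  have hderiv := (Q k).hasDerivAt_eval_div_pow_mul_pow Df Dg k (k + 1) hDf hDg
  rw [← funext (hQhat k)] at hderiv
  rw [hderiv.deriv, hQhat, hQhat, hQk]
  simp only [eval_add, eval_sub, eval_mul, eval_C]
  push_cast
  field_simp
  ring

/-- the RCA recursion: with `Q₀ = N_g` and
`Qₖ = Qₖ₋₁·D_g·((1-k)D_f' + (2-k)N_f) - k·Qₖ₋₁·D_g'·D_f + Qₖ₋₁'·D_g·D_f`, each `Qₖ` is a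
polynomial and `Q̂ₖ x = Qₖ x / (D_f x ^ k * D_g x ^ (k+1))` satisfies the ReCA recursion
`Q̂ₖ = Q̂ₖ₋₁' - (k-2)·(N_f/D_f)·Q̂ₖ₋₁`, `Q̂₀ = N_g/D_g`, where `D_f, D_g` are nonzero. -/
theorem stmt10 (Nf Df Ng Dg : Polynomial ℝ)
    (hDf : Df.eval 0 = 1) (hDg : Dg.eval 0 = 1)
    (Q : ℕ → Polynomial ℝ) (hQ0 : Q 0 = Ng)
    (hQk : ∀ k : ℕ, Q (k+1) =
      Q k * Dg * (Polynomial.C (1 - ((k:ℝ)+1)) * Df.derivative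
                    + Polynomial.C (2 - ((k:ℝ)+1)) * Nf)
      - Polynomial.C ((k:ℝ)+1) * Q k * Dg.derivative * Df
      + (Q k).derivative * Dg * Df)
    (Qhat : ℕ → ℝ → ℝ)
    (hQhat : ∀ (k : ℕ) (x : ℝ),
      Qhat k x = (Q k).eval x / ((Df.eval x) ^ k * (Dg.eval x) ^ (k+1))) :
    (∀ x, Qhat 0 x = Ng.eval x / Dg.eval x) ∧
    (∀ (k : ℕ) (x : ℝ), Df.eval x ≠ 0 → Dg.eval x ≠ 0 →
      Qhat (k+1) x = deriv (Qhat k) x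
        - (((k:ℝ)+1) - 2) * (Nf.eval x / Df.eval x) * Qhat k x) :=
  stmt10_general Nf Df Ng Dg Q hQ0 hQk Qhat hQhat
end

section
/- Let f = N_f/D_f, g = N_g/D_g be rational with D_f(0)=D_g(0)=1, F(x)=∫₀ˣ f, u=φ(x)=∫₀ˣ e^F, and g̃(u) = g(x)e^{F(x)}. With Qₖ as in the Rational C-Algorithm recursion (Q₀ = N_g, Qₖ = Qₖ₋₁·D_g·((1−k)D_f' + (2−k)N_f) − k·Qₖ₋₁·D_g'·D_f + Qₖ₋₁'·D_g·D_f), one has g̃^{(k)}(u) = Qₖ(x)·e^{(1−k)F(x)} / (D_f(x)^k D_g(x)^{k+1}) for all k ≥ 0 and x near 0. -/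
/-!
Since `φ' = e^F` does not vanish, `φ` is a local diffeomorphism at `0`, and differentiating
`g̃⁽ᵏ⁾ (φ x) = R_k x` gives `g̃⁽ᵏ⁺¹⁾ (φ x) = R_k' x · e^{-F x}`. With
`R_k = Q_k e^{(1-k)F} / (D_f^k D_g^{k+1})` and `F' = N_f / D_f`, the quotient rule shows
`R_k' = R_{k+1} e^F` precisely when `Q_{k+1}` is given by the recursion of the Rational
C-Algorithm (RCA), so the formula follows by induction on `k`.
-/

open Filter Polynomial Real
open scoped Topology

theorem eventually_hasStrictDerivAt_integral {f : ℝ → ℝ} {a : ℝ}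
    (hf : ∀ᶠ x in 𝓝 a, ContinuousAt f x) :
    ∀ᶠ x in 𝓝 a, HasStrictDerivAt (fun x => ∫ s in a..x, f s) (f x) x := by
  obtain ⟨ε, hε, hball⟩ := Metric.eventually_nhds_iff_ball.mp hf
  have hcont : ContinuousOn f (Metric.ball a ε) :=
    continuousOn_of_forall_continuousAt hball
  filter_upwards [Metric.ball_mem_nhds a hε] with x hx
  have hsub : Set.uIcc a x ⊆ Metric.ball a ε :=
    (convex_ball a ε).ordConnected.uIcc_subset (Metric.mem_ball_self hε) hx
  exact intervalIntegral.integral_hasStrictDerivAt_right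
    ((hcont.mono hsub).intervalIntegrable)
    (hcont.stronglyMeasurableAtFilter Metric.isOpen_ball x hx) (hball x hx)

theorem eventually_deriv_comp_eq_div {φ h R φ' R' : ℝ → ℝ} {a : ℝ}
    (hφa : HasStrictDerivAt φ (φ' a) a)
    (hφ : ∀ᶠ x in 𝓝 a, HasDerivAt φ (φ' x) x) (hφ' : ∀ᶠ x in 𝓝 a, φ' x ≠ 0)
    (hR : ∀ᶠ x in 𝓝 a, HasDerivAt R (R' x) x) (hhR : ∀ᶠ x in 𝓝 a, h (φ x) = R x) :
    ∀ᶠ x in 𝓝 a, deriv h (φ x) = R' x / φ' x := by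
  set e := (hφa.hasStrictFDerivAt_equiv hφ'.self_of_nhds).toOpenPartialHomeomorph φ
  have he : ∀ x, e x = φ x := fun _ => rfl
  have hsrc : e.source ∈ 𝓝 a :=
    e.open_source.mem_nhds (HasStrictFDerivAt.mem_toOpenPartialHomeomorph_source _)
  filter_upwards [(hφ.and (hφ'.and (hR.and (hhR.and hsrc)))).eventually_nhds]
    with x hx
  obtain ⟨hφx, hφ'x, hRx, -, hxs⟩ := hx.self_of_nhds
  have hxt : φ x ∈ e.target := e.map_source hxs
  have hinv : e.symm (φ x) = x := e.left_inv hxs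
  have heq : h =ᶠ[𝓝 (φ x)] R ∘ e.symm := by
    have hnear : ∀ᶠ u in 𝓝 (φ x), e.symm u ∈ {y | h (φ y) = R y} := by
      refine (e.continuousAt_symm hxt).preimage_mem_nhds ?_
      rw [hinv]
      exact hx.mono fun y hy => hy.2.2.2.1
    filter_upwards [hnear, e.open_target.mem_nhds hxt] with u hu hut
    rw [Function.comp_apply, ← hu, ← he, e.right_inv hut]
  have hsymm : HasDerivAt e.symm (φ' x)⁻¹ (φ x) :=
    e.hasDerivAt_symm hxt hφ'x (by rwa [hinv])
  have hcomp : HasDerivAt (R ∘ e.symm) (R' x * (φ' x)⁻¹) (φ x) :=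
    hRx.comp_of_eq (φ x) hsymm hinv.symm
  rw [(hcomp.congr_of_eventuallyEq heq).deriv, div_eq_mul_inv]

noncomputable def rcaNext (Nf Df Dg : ℝ[X]) (k : ℕ) (q : ℝ[X]) : ℝ[X] :=
  q * Dg * (C (1 - ((k:ℝ)+1)) * derivative Df + C (2 - ((k:ℝ)+1)) * Nf)
    - C ((k:ℝ)+1) * q * derivative Dg * Df + derivative q * Dg * Df

noncomputable def rcaTerm (Df Dg : ℝ[X]) (F : ℝ → ℝ) (k : ℕ) (q : ℝ[X]) (x : ℝ) : ℝ :=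
  q.eval x * exp ((1 - k) * F x) / (Df.eval x ^ k * Dg.eval x ^ (k+1))

theorem hasDerivAt_rcaTerm {Nf Df Dg q : ℝ[X]} {F : ℝ → ℝ} {x : ℝ} (k : ℕ)
    (hDf : Df.eval x ≠ 0) (hDg : Dg.eval x ≠ 0) (hF : HasDerivAt F (Nf.eval x / Df.eval x) x) :
    HasDerivAt (rcaTerm Df Dg F k q)
      (rcaTerm Df Dg F (k+1) (rcaNext Nf Df Dg k q) x * exp (F x)) x := by
  have hnum := (q.hasDerivAt x).mul ((hF.const_mul (1 - (k:ℝ))).exp)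
  have hden := ((Df.hasDerivAt x).pow k).mul ((Dg.hasDerivAt x).pow (k+1))
  refine (hnum.div hden (mul_ne_zero (pow_ne_zero _ hDf) (pow_ne_zero _ hDg))).congr_deriv ?_
  have hexp : exp ((1 - ((k + 1 : ℕ) : ℝ)) * F x) * exp (F x) = exp ((1 - k) * F x) := by
    rw [← exp_add]; push_cast; ring_nf
  rw [rcaTerm, div_mul_eq_mul_div, mul_assoc (eval x _), hexp]
  simp only [Pi.mul_apply, Pi.pow_apply, rcaNext, eval_add, eval_sub, eval_mul, eval_C]
  rcases k with _ | k
  · field_simp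
    ring
  · push_cast
    field_simp
    ring

/-- for rational `f = N_f/D_f`, `g = N_g/D_g` with `D_f 0 = D_g 0 = 1`, with `Qₖ`
as in the RCA recursion and `g̃ (φ x) = g x * exp (F x)`, one has
`g̃⁽ᵏ⁾ (φ x) = Qₖ x * exp ((1-k) F x) / (D_f x ^ k * D_g x ^ (k+1))` for all `k ≥ 0`, `x` near 0. -/
theorem stmt11 (Nf Df Ng Dg : Polynomial ℝ)
    (hDf : Df.eval 0 = 1) (hDg : Dg.eval 0 = 1)
    (f g F φ gt : ℝ → ℝ)
    (hfdef : ∀ x, Df.eval x ≠ 0 → f x = Nf.eval x / Df.eval x)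
    (hgdef : ∀ x, Dg.eval x ≠ 0 → g x = Ng.eval x / Dg.eval x)
    (hF : ∀ x, F x = ∫ s in (0:ℝ)..x, f s)
    (hφ : ∀ x, φ x = ∫ s in (0:ℝ)..x, Real.exp (F s))
    (hgt : ∀ᶠ x in nhds 0, gt (φ x) = g x * Real.exp (F x))
    (Q : ℕ → Polynomial ℝ) (hQ0 : Q 0 = Ng)
    (hQk : ∀ k : ℕ, Q (k+1) =
      Q k * Dg * (Polynomial.C (1 - ((k:ℝ)+1)) * Df.derivative
                    + Polynomial.C (2 - ((k:ℝ)+1)) * Nf)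
      - Polynomial.C ((k:ℝ)+1) * Q k * Dg.derivative * Df
      + (Q k).derivative * Dg * Df) :
    ∀ k : ℕ, ∀ᶠ x in nhds 0,
      iteratedDeriv k gt (φ x) =
        (Q k).eval x * Real.exp ((1 - (k:ℝ)) * F x)
          / ((Df.eval x) ^ k * (Dg.eval x) ^ (k+1)) := by
  have hDf0 : ∀ᶠ x in 𝓝 0, Df.eval x ≠ 0 :=
    Df.continuous.continuousAt.eventually_ne (by simp [hDf])
  have hDg0 : ∀ᶠ x in 𝓝 0, Dg.eval x ≠ 0 :=
    Dg.continuous.continuousAt.eventually_ne (by simp [hDg])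
  have hfc : ∀ᶠ x in 𝓝 0, ContinuousAt f x := by
    filter_upwards [hDf0.eventually_nhds] with x hx
    exact (Nf.continuousAt.div Df.continuousAt hx.self_of_nhds).congr
      (hx.mono fun y hy => (hfdef y hy).symm)
  have hFd : ∀ᶠ x in 𝓝 0, HasStrictDerivAt F (f x) x := by
    simpa only [← funext hF] using eventually_hasStrictDerivAt_integral hfc
  have hφd : ∀ᶠ x in 𝓝 0, HasStrictDerivAt φ (exp (F x)) x := by
    simpa only [← funext hφ] using eventually_hasStrictDerivAt_integral
      (hFd.mono fun x hx => hx.hasDerivAt.continuousAt.rexp)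
  have hRd : ∀ k, ∀ᶠ x in 𝓝 0, HasDerivAt (rcaTerm Df Dg F k (Q k))
      (rcaTerm Df Dg F (k+1) (Q (k+1)) x * exp (F x)) x := by
    intro k
    filter_upwards [hDf0, hDg0, hFd] with x hxf hxg hxF
    rw [hQk k]
    exact hasDerivAt_rcaTerm k hxf hxg (hfdef x hxf ▸ hxF.hasDerivAt)
  show ∀ k, ∀ᶠ x in 𝓝 0, iteratedDeriv k gt (φ x) = rcaTerm Df Dg F k (Q k) x
  intro k
  induction k with
  | zero =>
    filter_upwards [hgt, hDg0] with x hx hxg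
    rw [iteratedDeriv_zero, hx, hgdef x hxg, rcaTerm, hQ0]
    simp only [CharP.cast_eq_zero, sub_zero, one_mul, pow_zero, zero_add, pow_one]
    rw [div_mul_eq_mul_div]
  | succ k ih =>
    filter_upwards [eventually_deriv_comp_eq_div hφd.self_of_nhds
      (hφd.mono fun x hx => hx.hasDerivAt) (.of_forall fun x => exp_ne_zero (F x)) (hRd k) ih]
      with x hx
    rw [iteratedDeriv_succ, hx, mul_div_cancel_right₀ _ (exp_ne_zero _)]
end

section
/- The function h(ξ) = √2·√((−4+ξ²+2√(4+2ξ²))/ξ²)·ξ·(ξ²+2√(4+2ξ²)+2) / ((2+ξ²)(√(4+2ξ²)+6)), extended by h(0)=0, is an odd real analytic function in a neighborhood of 0. -/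
/-! The only obstruction to analyticity at `0` is the removable singularity of
`(-4 + ξ² + 2√(4 + 2ξ²)) / ξ²`. Writing `s = √(4 + 2ξ²)`, so that `ξ² = (s² - 4) / 2`,
this quotient equals `(s + 6) / (s + 2)` for `ξ ≠ 0`. The latter is analytic and equal to `2`
at `0`, so after the substitution every square root is taken of an analytic function that
is nonzero at `0`. Oddness holds because `h ξ` is `ξ` times a function of `ξ²`. -/

open Filter Topology

theorem AnalyticAt.sqrt {f : ℝ → ℝ} {x : ℝ} (hf : AnalyticAt ℝ f x) (hx : f x ≠ 0) :
    AnalyticAt ℝ (fun y => √(f y)) x :=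
  ((Real.contDiffAt_sqrt hx).comp x hf.contDiffAt).analyticAt

theorem div_sq_eq_sqrt_add_six_div_sqrt_add_two {ξ : ℝ} (hξ : ξ ≠ 0) :
    (-4 + ξ ^ 2 + 2 * √(4 + 2 * ξ ^ 2)) / ξ ^ 2
      = (√(4 + 2 * ξ ^ 2) + 6) / (√(4 + 2 * ξ ^ 2) + 2) := by
  set s := √(4 + 2 * ξ ^ 2)
  have hs : s ^ 2 = 4 + 2 * ξ ^ 2 := Real.sq_sqrt (by positivity)
  have hs2 : s + 2 ≠ 0 := by positivity
  field_simp
  linear_combination 2 * hs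

theorem analyticAt_urabe_regularized :
    AnalyticAt ℝ (fun ξ : ℝ =>
      (√2 * √((√(4 + 2 * ξ ^ 2) + 6) / (√(4 + 2 * ξ ^ 2) + 2))
        * ξ * (ξ ^ 2 + 2 * √(4 + 2 * ξ ^ 2) + 2))
      / ((2 + ξ ^ 2) * (√(4 + 2 * ξ ^ 2) + 6))) 0 := by
  have hs0 : √(4 + 2 * (0 : ℝ) ^ 2) = 2 := by
    rw [show (4 + 2 * (0 : ℝ) ^ 2) = 2 ^ 2 by norm_num, Real.sqrt_sq zero_le_two]
  have hs : AnalyticAt ℝ (fun ξ : ℝ => √(4 + 2 * ξ ^ 2)) 0 :=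
    AnalyticAt.sqrt (by fun_prop) (by norm_num)
  have hratio : AnalyticAt ℝ
      (fun ξ : ℝ => √((√(4 + 2 * ξ ^ 2) + 6) / (√(4 + 2 * ξ ^ 2) + 2))) 0 :=
    AnalyticAt.sqrt ((hs.add analyticAt_const).div (hs.add analyticAt_const) (by norm_num [hs0]))
      (by norm_num [hs0])
  exact AnalyticAt.div (by fun_prop) (by fun_prop) (by norm_num [hs0])

/-- the Urabe function defined for `ξ ≠ 0` by
`h ξ = √2·√((-4+ξ²+2√(4+2ξ²))/ξ²)·ξ·(ξ²+2√(4+2ξ²)+2) / ((2+ξ²)(√(4+2ξ²)+6))` and `h 0 = 0`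
is odd and real analytic in a neighborhood of `0`. -/
theorem stmt16 (h : ℝ → ℝ) (h0 : h 0 = 0)
    (hdef : ∀ ξ : ℝ, ξ ≠ 0 → h ξ =
      (Real.sqrt 2 * Real.sqrt ((-4 + ξ^2 + 2 * Real.sqrt (4 + 2*ξ^2)) / ξ^2)
        * ξ * (ξ^2 + 2 * Real.sqrt (4 + 2*ξ^2) + 2))
      / ((2 + ξ^2) * (Real.sqrt (4 + 2*ξ^2) + 6))) :
    AnalyticAt ℝ h 0 ∧ ∀ ξ, h (-ξ) = - h ξ := by
  refine ⟨analyticAt_urabe_regularized.congr (Eventually.of_forall fun ξ => ?_), fun ξ => ?_⟩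
  · rcases eq_or_ne ξ 0 with rfl | hξ
    · simp [h0]
    · rw [hdef ξ hξ, div_sq_eq_sqrt_add_six_div_sqrt_add_two hξ]
  · rcases eq_or_ne ξ 0 with rfl | hξ
    · simp [h0]
    · rw [hdef ξ hξ, hdef (-ξ) (neg_ne_zero.mpr hξ), neg_sq]
      ring
end

section
/- With P̂ₖ as in the Reduced C-Algorithm applied to a polynomial (truncated) odd function h, the value P̂ₖ(0) depends only on the coefficients of h of degree < k; equivalently, replacing h by its truncation modulo ξ^{M−k+1} does not change P̂ⱼ(0) for any j ≤ M. -/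
/-!
`P̂ₖ` is built from `P̂ₖ₋₁` by one differentiation and products with `h` and `h'`. Working modulo
powers of `ξ`, differentiation costs one power of `ξ` while products cost nothing, so by induction
on `k`, `h ≡ h̃ (mod ξ^(n+k))` forces `P̂ₖ ≡ P̃ₖ (mod ξ^(n+1))`. The first step is the only one in
which `h'` is not already known to the required precision; there it is multiplied by `P̂₀ = ξ`,
which recovers the lost power. Taking `n = 0` gives the claim about `P̂ₖ(0)`.
-/

open PowerSeries

namespace PowerSeries

variable {R : Type*} [CommRing R]

theorem sModEq_X_pow_iff {n : ℕ} {f g : R⟦X⟧} :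
    f ≡ g [SMOD Ideal.span {(X : R⟦X⟧) ^ n}] ↔ ∀ i < n, coeff i f = coeff i g := by
  simp only [SModEq.sub_mem, Ideal.mem_span_singleton, X_pow_dvd_iff, map_sub, sub_eq_zero]

theorem sModEq_X_iff {f g : R⟦X⟧} :
    f ≡ g [SMOD Ideal.span {(X : R⟦X⟧)}] ↔ constantCoeff f = constantCoeff g := by
  rw [← pow_one (X : R⟦X⟧), sModEq_X_pow_iff]
  simp

theorem SModEq.X_pow_mono {m n : ℕ} {f g : R⟦X⟧} (hmn : m ≤ n)
    (h : f ≡ g [SMOD Ideal.span {(X : R⟦X⟧) ^ n}]) :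
    f ≡ g [SMOD Ideal.span {(X : R⟦X⟧) ^ m}] :=
  h.mono (Ideal.span_singleton_le_span_singleton.mpr (pow_dvd_pow X hmn))

theorem SModEq.derivative {n : ℕ} {f g : R⟦X⟧}
    (h : f ≡ g [SMOD Ideal.span {(X : R⟦X⟧) ^ (n + 1)}]) :
    d⁄dX R f ≡ d⁄dX R g [SMOD Ideal.span {(X : R⟦X⟧) ^ n}] := by
  rw [sModEq_X_pow_iff] at h ⊢
  intro i hi
  rw [coeff_derivative, coeff_derivative, h (i + 1) (by omega)]

theorem SModEq.X_mul {n : ℕ} {f g : R⟦X⟧}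
    (h : f ≡ g [SMOD Ideal.span {(X : R⟦X⟧) ^ n}]) :
    X * f ≡ X * g [SMOD Ideal.span {(X : R⟦X⟧) ^ (n + 1)}] := by
  rw [SModEq.sub_mem, Ideal.mem_span_singleton] at h ⊢
  rw [← mul_sub, pow_succ']
  exact mul_dvd_mul_left X h

end PowerSeries

section ReducedCAlgorithm

variable {R : Type*} [CommRing R]

/-- The `P̂ₖ` of the Reduced C-Algorithm; the paper's factor `2k - 1` is `c (k - 1)`. -/
noncomputable def recaSeq (c : ℕ → R) (h : R⟦X⟧) : ℕ → R⟦X⟧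
  | 0 => X
  | k + 1 => d⁄dX R (recaSeq c h k) * (1 + h) - C (c k) * recaSeq c h k * d⁄dX R h

theorem eq_recaSeq {c : ℕ → R} {h : R⟦X⟧} {P : ℕ → R⟦X⟧} (hP0 : P 0 = X)
    (hP : ∀ k, P (k + 1) = d⁄dX R (P k) * (1 + h) - C (c k) * P k * d⁄dX R h) :
    P = recaSeq c h := by
  funext k
  induction k with
  | zero => exact hP0
  | succ k ih => rw [hP, ih, recaSeq]

theorem recaSeq_sModEq (c : ℕ → R) {h₁ h₂ : R⟦X⟧} {n k : ℕ}
    (hh : h₁ ≡ h₂ [SMOD Ideal.span {(X : R⟦X⟧) ^ (k + n)}]) :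
    recaSeq c h₁ k ≡ recaSeq c h₂ k [SMOD Ideal.span {(X : R⟦X⟧) ^ (n + 1)}] := by
  induction k generalizing n with
  | zero => rfl
  | succ k ih =>
    have hdP : d⁄dX R (recaSeq c h₁ k) ≡ d⁄dX R (recaSeq c h₂ k)
        [SMOD Ideal.span {(X : R⟦X⟧) ^ (n + 1)}] :=
      (ih (n := n + 1) (hh.X_pow_mono (by omega))).derivative
    have hPdh : recaSeq c h₁ k * d⁄dX R h₁ ≡ recaSeq c h₂ k * d⁄dX R h₂
        [SMOD Ideal.span {(X : R⟦X⟧) ^ (n + 1)}] := by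
      rcases k with _ | k
      · exact (hh.X_pow_mono (m := n + 1) (by omega)).derivative.X_mul
      · exact (ih (hh.X_pow_mono (by omega))).mul
          (hh.X_pow_mono (m := n + 2) (by omega)).derivative
    have hh' : 1 + h₁ ≡ 1 + h₂ [SMOD Ideal.span {(X : R⟦X⟧) ^ (n + 1)}] :=
      SModEq.rfl.add (hh.X_pow_mono (by omega))
    rw [recaSeq, recaSeq, mul_assoc, mul_assoc]
    exact (hdP.mul hh').sub (SModEq.rfl.mul hPdh)

end ReducedCAlgorithm

theorem stmt17_general (h₁ h₂ : PowerSeries ℝ)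
    (P₁ P₂ : ℕ → PowerSeries ℝ)
    (hP₁0 : P₁ 0 = PowerSeries.X) (hP₂0 : P₂ 0 = PowerSeries.X)
    (hP₁k : ∀ k : ℕ, P₁ (k+1) =
      (PowerSeries.derivative ℝ (P₁ k)) * (1 + h₁)
        - PowerSeries.C (2 * ((k:ℝ)+1) - 1) * P₁ k * PowerSeries.derivative ℝ h₁)
    (hP₂k : ∀ k : ℕ, P₂ (k+1) =
      (PowerSeries.derivative ℝ (P₂ k)) * (1 + h₂)
        - PowerSeries.C (2 * ((k:ℝ)+1) - 1) * P₂ k * PowerSeries.derivative ℝ h₂) :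
    (∀ k : ℕ, (∀ i < k, PowerSeries.coeff i h₁ = PowerSeries.coeff i h₂) →
      PowerSeries.constantCoeff (P₁ k) = PowerSeries.constantCoeff (P₂ k)) ∧
    (∀ M : ℕ, (∀ i ≤ M, PowerSeries.coeff i h₁ = PowerSeries.coeff i h₂) →
      ∀ j ≤ M, PowerSeries.constantCoeff (P₁ j) = PowerSeries.constantCoeff (P₂ j)) := by
  let c : ℕ → ℝ := fun k => 2 * ((k : ℝ) + 1) - 1
  obtain rfl : P₁ = recaSeq c h₁ := eq_recaSeq hP₁0 hP₁k
  obtain rfl : P₂ = recaSeq c h₂ := eq_recaSeq hP₂0 hP₂k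
  have hconst (k : ℕ) (hk : ∀ i < k, coeff i h₁ = coeff i h₂) :
      constantCoeff (recaSeq c h₁ k) = constantCoeff (recaSeq c h₂ k) :=
    sModEq_X_iff.mp <| by
      simpa only [zero_add, pow_one] using recaSeq_sModEq c (n := 0) (sModEq_X_pow_iff.mpr hk)
  exact ⟨hconst, fun M hM j hj => hconst j fun i hi => hM i (by omega)⟩

/-- for the ReCA recursion `P̂₀ = ξ`, `P̂ₖ = P̂ₖ₋₁'·(1+h) - (2k-1)·P̂ₖ₋₁·h'` on
formal power series, the constant term `P̂ₖ(0)` depends only on the coefficients of `h` of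
degree `< k`; consequently, truncating `h` (keeping all coefficients of degree `≤ M`) does not
change `P̂ⱼ(0)` for any `j ≤ M`. -/
theorem stmt17 (h₁ h₂ : PowerSeries ℝ)
    (hc₁ : PowerSeries.constantCoeff h₁ = 0) (hc₂ : PowerSeries.constantCoeff h₂ = 0)
    (P₁ P₂ : ℕ → PowerSeries ℝ)
    (hP₁0 : P₁ 0 = PowerSeries.X) (hP₂0 : P₂ 0 = PowerSeries.X)
    (hP₁k : ∀ k : ℕ, P₁ (k+1) =
      (PowerSeries.derivative ℝ (P₁ k)) * (1 + h₁)
        - PowerSeries.C (2 * ((k:ℝ)+1) - 1) * P₁ k * PowerSeries.derivative ℝ h₁)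
    (hP₂k : ∀ k : ℕ, P₂ (k+1) =
      (PowerSeries.derivative ℝ (P₂ k)) * (1 + h₂)
        - PowerSeries.C (2 * ((k:ℝ)+1) - 1) * P₂ k * PowerSeries.derivative ℝ h₂) :
    (∀ k : ℕ, (∀ i < k, PowerSeries.coeff i h₁ = PowerSeries.coeff i h₂) →
      PowerSeries.constantCoeff (P₁ k) = PowerSeries.constantCoeff (P₂ k)) ∧
    (∀ M : ℕ, (∀ i ≤ M, PowerSeries.coeff i h₁ = PowerSeries.coeff i h₂) →
      ∀ j ≤ M, PowerSeries.constantCoeff (P₁ j) = PowerSeries.constantCoeff (P₂ j)) :=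
  stmt17_general h₁ h₂ P₁ P₂ hP₁0 hP₂0 hP₁k hP₂k
end
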